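/- Let h be kernel ridge regression prediction with PSD kernel matrix K ∈ R^{n×n}, test kernel vector k_x, regularization λ > 0: h(x) = y^T (K + λI)^{-1} k_x, and let ĥ be the same with PSD approximation K̂ and k̂_x. Assume Σ y_i = 0, σ_y² = (1/n)Σ y_i², and ‖k_x‖_∞ ≤ κ. Then |ĥ(x) − h(x)| ≤ (σ_y √n / λ)‖k̂_x − k_x‖₂ + (κ σ_y n / λ²)‖K̂ − K‖₂. -/

import Mathlib

/-!
Write `A = K + λI` and `Â = K̂ + λI`. For PSD `K` one has `λ‖w‖² ≤ wᵀAw ≤ ‖w‖‖Aw‖`, so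
`‖A⁻¹v‖ ≤ ‖v‖/λ`. The resolvent identity `Â⁻¹ - A⁻¹ = -Â⁻¹(K̂ - K)A⁻¹` splits
`ĥ(x) - h(x) = yᵀÂ⁻¹(k̂ₓ - kₓ) - yᵀÂ⁻¹(K̂ - K)A⁻¹kₓ`, and Cauchy–Schwarz bounds the two terms by
`‖y‖‖k̂ₓ - kₓ‖/λ` and `‖y‖‖K̂ - K‖‖kₓ‖/λ²`. Finally `‖y‖ = √n σ_y` and `‖kₓ‖ ≤ √n κ`.
-/

open Matrix WithLp

variable {ι : Type*} [Fintype ι]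

lemma abs_dotProduct_le_norm_toLp_mul (u v : ι → ℝ) :
    |u ⬝ᵥ v| ≤ ‖toLp 2 u‖ * ‖toLp 2 v‖ := by
  have h : u ⬝ᵥ v = inner ℝ (toLp 2 u) (toLp 2 v) := by
    rw [EuclideanSpace.inner_eq_star_dotProduct, star_trivial, dotProduct_comm]
  rw [h]
  exact abs_real_inner_le_norm _ _

lemma norm_toLp_eq_sqrt_card_mul_sqrt_mean_sq (y : ι → ℝ) :
    ‖toLp 2 y‖ = √(Fintype.card ι) * √(1 / (Fintype.card ι : ℝ) * ∑ i, y i ^ 2) := by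
  rw [EuclideanSpace.norm_eq, ← Real.sqrt_mul (Nat.cast_nonneg _)]
  simp only [Real.norm_eq_abs, sq_abs]
  rcases isEmpty_or_nonempty ι with _ | _
  · simp
  · rw [← mul_assoc, mul_one_div_cancel (by positivity), one_mul]

lemma norm_toLp_le_sqrt_card_mul {v : ι → ℝ} {κ : ℝ} (hv : ∀ i, |v i| ≤ κ) :
    ‖toLp 2 v‖ ≤ √(Fintype.card ι) * κ := by
  rcases isEmpty_or_nonempty ι with _ | ⟨⟨i₀⟩⟩
  · simp [Subsingleton.elim v 0]
  have hκ : 0 ≤ κ := (abs_nonneg _).trans (hv i₀)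
  rw [EuclideanSpace.norm_eq, ← Real.sqrt_sq hκ, ← Real.sqrt_mul (Nat.cast_nonneg _)]
  gcongr
  calc ∑ i, ‖v i‖ ^ 2 ≤ ∑ _i : ι, κ ^ 2 := by
        gcongr with i
        exact hv i
    _ = Fintype.card ι * κ ^ 2 := by simp

namespace Matrix.PosSemidef

variable [DecidableEq ι] {K : Matrix ι ι ℝ}

lemma isUnit_det_add_smul_one (hK : K.PosSemidef) {lam : ℝ} (hlam : 0 < lam) :
    IsUnit (K + lam • 1).det :=
  (isUnit_iff_isUnit_det _).mp (PosDef.posSemidef_add hK (PosDef.one.smul hlam)).isUnit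

lemma mul_norm_toLp_le_norm_add_smul_one_mulVec (hK : K.PosSemidef) (lam : ℝ)
    (w : ι → ℝ) : lam * ‖toLp 2 w‖ ≤ ‖toLp 2 ((K + lam • 1) *ᵥ w)‖ := by
  have hquad : lam * ‖toLp 2 w‖ ^ 2 ≤ w ⬝ᵥ ((K + lam • 1) *ᵥ w) := by
    have hKw : 0 ≤ w ⬝ᵥ (K *ᵥ w) := by simpa using hK.dotProduct_mulVec_nonneg w
    rw [add_mulVec, dotProduct_add, smul_mulVec, one_mulVec, dotProduct_smul, smul_eq_mul,
      ← real_inner_self_eq_norm_sq, EuclideanSpace.inner_eq_star_dotProduct, star_trivial]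
    exact le_add_of_nonneg_left hKw
  rcases (norm_nonneg (toLp 2 w)).eq_or_lt with hw | hw
  · rw [← hw, mul_zero]
    exact norm_nonneg _
  · refine le_of_mul_le_mul_right ?_ hw
    calc lam * ‖toLp 2 w‖ * ‖toLp 2 w‖ = lam * ‖toLp 2 w‖ ^ 2 := by ring
      _ ≤ |w ⬝ᵥ ((K + lam • 1) *ᵥ w)| := hquad.trans (le_abs_self _)
      _ ≤ ‖toLp 2 ((K + lam • 1) *ᵥ w)‖ * ‖toLp 2 w‖ := by
        rw [mul_comm]
        exact abs_dotProduct_le_norm_toLp_mul _ _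

lemma norm_toLp_inv_add_smul_one_mulVec_le (hK : K.PosSemidef) {lam : ℝ} (hlam : 0 < lam)
    (v : ι → ℝ) :
    ‖toLp 2 ((K + lam • 1)⁻¹ *ᵥ v)‖ ≤ ‖toLp 2 v‖ / lam := by
  rw [le_div_iff₀ hlam, mul_comm]
  have h := hK.mul_norm_toLp_le_norm_add_smul_one_mulVec lam ((K + lam • 1)⁻¹ *ᵥ v)
  rwa [mulVec_mulVec, mul_nonsing_inv _ (hK.isUnit_det_add_smul_one hlam), one_mulVec] at h

end Matrix.PosSemidef

lemma norm_toLp_mulVec_le [DecidableEq ι] (M : Matrix ι ι ℝ) (v : ι → ℝ) :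
    ‖toLp 2 (M *ᵥ v)‖ ≤ ‖toEuclideanCLM (𝕜 := ℝ) M‖ * ‖toLp 2 v‖ := by
  rw [← toEuclideanCLM_toLp]
  exact ContinuousLinearMap.le_opNorm _ _

section Perturbation

variable [DecidableEq ι] {K Khat : Matrix ι ι ℝ} {lam : ℝ}

lemma inv_add_smul_one_mulVec_sub_inv_add_smul_one_mulVec (hK : K.PosSemidef)
    (hKhat : Khat.PosSemidef) (hlam : 0 < lam) (kx kxhat : ι → ℝ) :
    (Khat + lam • 1)⁻¹ *ᵥ kxhat - (K + lam • 1)⁻¹ *ᵥ kx =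
      (Khat + lam • 1)⁻¹ *ᵥ (kxhat - kx) -
        (Khat + lam • 1)⁻¹ *ᵥ ((Khat - K) *ᵥ ((K + lam • 1)⁻¹ *ᵥ kx)) := by
  have hunit : IsUnit (Khat + lam • 1) ↔ IsUnit (K + lam • 1) := by
    simp only [isUnit_iff_isUnit_det, hK.isUnit_det_add_smul_one hlam,
      hKhat.isUnit_det_add_smul_one hlam]
  have hresolvent : (Khat + lam • 1)⁻¹ * (Khat - K) * (K + lam • 1)⁻¹ =
      (K + lam • 1)⁻¹ - (Khat + lam • 1)⁻¹ := by
    have h := inv_sub_inv hunit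
    rw [add_sub_add_right_eq_sub] at h
    rw [← neg_sub K Khat, mul_neg, neg_mul, ← h, neg_sub]
  rw [mulVec_mulVec, mulVec_mulVec, hresolvent, mulVec_sub, sub_mulVec]
  abel

lemma abs_dotProduct_inv_add_smul_one_mulVec_sub_le (hK : K.PosSemidef)
    (hKhat : Khat.PosSemidef) (hlam : 0 < lam) (y kx kxhat : ι → ℝ) :
    |y ⬝ᵥ ((Khat + lam • 1)⁻¹ *ᵥ kxhat) - y ⬝ᵥ ((K + lam • 1)⁻¹ *ᵥ kx)| ≤
      ‖toLp 2 y‖ / lam * ‖toLp 2 (kxhat - kx)‖ +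
        ‖toLp 2 y‖ * ‖toLp 2 kx‖ / lam ^ 2 * ‖toEuclideanCLM (𝕜 := ℝ) (Khat - K)‖ := by
  have hfirst := hKhat.norm_toLp_inv_add_smul_one_mulVec_le hlam (kxhat - kx)
  have hsecond : ‖toLp 2 ((Khat + lam • 1)⁻¹ *ᵥ ((Khat - K) *ᵥ ((K + lam • 1)⁻¹ *ᵥ kx)))‖ ≤
      ‖toEuclideanCLM (𝕜 := ℝ) (Khat - K)‖ * ‖toLp 2 kx‖ / lam ^ 2 :=
    calc _ ≤ ‖toLp 2 ((Khat - K) *ᵥ ((K + lam • 1)⁻¹ *ᵥ kx))‖ / lam :=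
          hKhat.norm_toLp_inv_add_smul_one_mulVec_le hlam _
      _ ≤ ‖toEuclideanCLM (𝕜 := ℝ) (Khat - K)‖ * ‖toLp 2 ((K + lam • 1)⁻¹ *ᵥ kx)‖ / lam := by
          gcongr
          exact norm_toLp_mulVec_le _ _
      _ ≤ ‖toEuclideanCLM (𝕜 := ℝ) (Khat - K)‖ * (‖toLp 2 kx‖ / lam) / lam := by
          gcongr
          exact hK.norm_toLp_inv_add_smul_one_mulVec_le hlam kx
      _ = ‖toEuclideanCLM (𝕜 := ℝ) (Khat - K)‖ * ‖toLp 2 kx‖ / lam ^ 2 := by ring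
  calc _ = |y ⬝ᵥ ((Khat + lam • 1)⁻¹ *ᵥ kxhat - (K + lam • 1)⁻¹ *ᵥ kx)| := by
        rw [dotProduct_sub]
    _ ≤ ‖toLp 2 y‖ * ‖toLp 2 ((Khat + lam • 1)⁻¹ *ᵥ kxhat - (K + lam • 1)⁻¹ *ᵥ kx)‖ :=
        abs_dotProduct_le_norm_toLp_mul _ _
    _ ≤ ‖toLp 2 y‖ * (‖toLp 2 (kxhat - kx)‖ / lam +
          ‖toEuclideanCLM (𝕜 := ℝ) (Khat - K)‖ * ‖toLp 2 kx‖ / lam ^ 2) := by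
        gcongr
        rw [inv_add_smul_one_mulVec_sub_inv_add_smul_one_mulVec hK hKhat hlam, toLp_sub]
        exact (norm_sub_le _ _).trans (add_le_add hfirst hsecond)
    _ = _ := by ring

end Perturbation

theorem krr_stability_general (n : ℕ)
    (K Khat : Matrix (Fin n) (Fin n) ℝ) (hK : K.PosSemidef) (hKhat : Khat.PosSemidef)
    (lam : ℝ) (hlam : 0 < lam)
    (y kx kxhat : Fin n → ℝ)
    (σy : ℝ) (hσy : σy = Real.sqrt ((1 / (n : ℝ)) * ∑ i, y i ^ 2))
    (κ : ℝ) (hkx : ∀ i, |kx i| ≤ κ)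
    (h hhat : ℝ)
    (hdef : h = y ⬝ᵥ ((K + lam • (1 : Matrix (Fin n) (Fin n) ℝ))⁻¹ *ᵥ kx))
    (hhatdef : hhat = y ⬝ᵥ ((Khat + lam • (1 : Matrix (Fin n) (Fin n) ℝ))⁻¹ *ᵥ kxhat)) :
    |hhat - h| ≤
      (σy * Real.sqrt n / lam) *
          ‖(WithLp.equiv 2 (Fin n → ℝ)).symm (kxhat - kx)‖ +
        (κ * σy * n / lam ^ 2) * ‖Matrix.toEuclideanCLM (𝕜 := ℝ) (Khat - K)‖ := by
  have hy : ‖toLp 2 y‖ = σy * √n := by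
    rw [norm_toLp_eq_sqrt_card_mul_sqrt_mean_sq, Fintype.card_fin, hσy, mul_comm]
  have hkx_norm : ‖toLp 2 kx‖ ≤ √n * κ := by
    simpa using norm_toLp_le_sqrt_card_mul hkx
  have hyk : ‖toLp 2 y‖ * ‖toLp 2 kx‖ ≤ κ * σy * n := by
    have hσy0 : 0 ≤ σy := hσy ▸ Real.sqrt_nonneg _
    calc _ ≤ σy * √n * (√n * κ) := by rw [hy]; gcongr
      _ = κ * σy * n := by linear_combination σy * κ * Real.mul_self_sqrt n.cast_nonneg
  rw [hdef, hhatdef, ← hy, WithLp.equiv_symm_apply]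
  refine (abs_dotProduct_inv_add_smul_one_mulVec_sub_le hK hKhat hlam y kx kxhat).trans ?_
  gcongr

/-- Stability of kernel ridge regression w.r.t. kernel perturbations
(Proposition of Sutherland–Schneider): with PSD kernel matrices `K, K̂`, test kernel vectors
`k_x, k̂_x` with `‖k_x‖_∞ ≤ κ`, centered labels `y` with `σ_y² = (1/n) Σ y_i²`, and
regularization `λ > 0`, the predictions `h(x) = yᵀ(K + λI)⁻¹k_x` and
`ĥ(x) = yᵀ(K̂ + λI)⁻¹k̂_x` satisfy
`|ĥ(x) − h(x)| ≤ (σ_y √n / λ)‖k̂_x − k_x‖₂ + (κ σ_y n / λ²)‖K̂ − K‖₂`,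
where `‖·‖₂` is the Euclidean norm for vectors and the spectral norm for matrices. -/
theorem krr_stability (n : ℕ) (hn : 1 ≤ n)
    (K Khat : Matrix (Fin n) (Fin n) ℝ) (hK : K.PosSemidef) (hKhat : Khat.PosSemidef)
    (lam : ℝ) (hlam : 0 < lam)
    (y kx kxhat : Fin n → ℝ) (hy : ∑ i, y i = 0)
    (σy : ℝ) (hσy : σy = Real.sqrt ((1 / (n : ℝ)) * ∑ i, y i ^ 2))
    (κ : ℝ) (hkx : ∀ i, |kx i| ≤ κ)
    (h hhat : ℝ)
    (hdef : h = y ⬝ᵥ ((K + lam • (1 : Matrix (Fin n) (Fin n) ℝ))⁻¹ *ᵥ kx))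
    (hhatdef : hhat = y ⬝ᵥ ((Khat + lam • (1 : Matrix (Fin n) (Fin n) ℝ))⁻¹ *ᵥ kxhat)) :
    |hhat - h| ≤
      (σy * Real.sqrt n / lam) *
          ‖(WithLp.equiv 2 (Fin n → ℝ)).symm (kxhat - kx)‖ +
        (κ * σy * n / lam ^ 2) * ‖Matrix.toEuclideanCLM (𝕜 := ℝ) (Khat - K)‖ :=
  krr_stability_general n K Khat hK hKhat lam hlam y kx kxhat σy hσy κ hkx h hhat hdef hhatdef
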